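/- arXiv:1308.3329 — 10 statements merged into one kernel-verified Lean document; each statement's English description precedes it below -/
import Mathlib

section
/- For all non-negative integers K and O, it holds that 5K² − 5O(2K+1) + 17O² ≥ 3K². -/
theorem stmt0 (K O : ℕ) :
    5 * (K : ℝ) ^ 2 - 5 * O * (2 * K + 1) + 17 * O ^ 2 ≥ 3 * K ^ 2 := by
  rcases Nat.lt_or_ge O 2 with h | h
  · interval_cases O
    · push_cast; nlinarith [sq_nonneg (K:ℝ)]
    · rcases Nat.lt_or_ge K 3 with hk | hk
      · interval_cases K <;> norm_num
      · have : (K:ℝ) ≥ 3 := by exact_mod_cast hk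
        push_cast; nlinarith
  · have : (O:ℝ) ≥ 2 := by exact_mod_cast h
    nlinarith [sq_nonneg (2*(K:ℝ) - 5*O)]
end

section
/- For all non-negative integers K, O and Δ with Δ ≤ min(K, O), it holds that 5(K−Δ)K − 5(O−Δ)(2K+1) + 17O² ≥ 3K². -/
theorem stmt1 (K O Δ : ℕ) (h : Δ ≤ min K O) :
    5 * ((K : ℝ) - Δ) * K - 5 * ((O : ℝ) - Δ) * (2 * K + 1) + 17 * O ^ 2 ≥ 3 * K ^ 2 := by
  have hO : (Δ:ℝ) ≤ O := by exact_mod_cast h.trans (min_le_right _ _)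
  have hΔ : (0:ℝ) ≤ Δ := Nat.cast_nonneg _
  have hKn : (0:ℝ) ≤ K := Nat.cast_nonneg _
  rcases Nat.lt_or_ge O 2 with h2 | h2
  · interval_cases O
    · push_cast at *
      nlinarith [sq_nonneg ((K:ℝ))]
    · rcases Nat.lt_or_ge K 3 with h3 | h3
      · interval_cases K <;> (simp_all; nlinarith)
      · have h3' : (3:ℝ) ≤ K := by exact_mod_cast h3
        push_cast at *
        nlinarith [mul_nonneg (by linarith : (0:ℝ) ≤ (K:ℝ) - 2) (by linarith : (0:ℝ) ≤ (K:ℝ) - 3), mul_nonneg hΔ (by linarith : (0:ℝ) ≤ (K:ℝ) + 1)]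
  · have h2' : (2:ℝ) ≤ O := by exact_mod_cast h2
    nlinarith [sq_nonneg (2*(K:ℝ) - 5*O), mul_nonneg (by linarith : (0:ℝ) ≤ (O:ℝ)) (by linarith : (0:ℝ) ≤ 9*(O:ℝ) - 10)]
end

section
/- For all non-negative integers K and O, it holds that K²(1+√3) − K(2O(√3−1) + 1 + √3) + O(O(3√3−5) + 3 − √3) ≥ 0. -/
theorem stmt2 (K O : ℕ) :
    (K : ℝ) ^ 2 * (1 + Real.sqrt 3)
      - K * (2 * O * (Real.sqrt 3 - 1) + 1 + Real.sqrt 3)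
      + O * (O * (3 * Real.sqrt 3 - 5) + 3 - Real.sqrt 3) ≥ 0 := by
  set t := Real.sqrt 3 with ht
  have h3 : t ^ 2 = 3 := Real.sq_sqrt (by norm_num)
  have h0 : 0 ≤ t := Real.sqrt_nonneg 3
  have hl : (1.73 : ℝ) ≤ t := by nlinarith
  have hu : t ≤ (1.8 : ℝ) := by nlinarith
  have hI : (0 : ℝ) ≤ ((O : ℝ) - K) ^ 2 + ((O : ℝ) - K)
      - 2 * (t - 1) * ((O : ℝ) - K) * O + (4 - 2 * t) * O * ((O : ℝ) - 1) := by
    rcases le_or_gt O K with h | h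
    · -- K ≥ O
      have hd : (O : ℝ) ≤ K := by exact_mod_cast h
      have hdd : ((K : ℝ) - O) * ((K : ℝ) - O - 1) ≥ 0 := by
        rcases eq_or_lt_of_le h with rfl | h'
        · simp
        · have : (O : ℝ) + 1 ≤ K := by exact_mod_cast h'
          nlinarith
      have hOO : ((O : ℝ)) * ((O : ℝ) - 1) ≥ 0 := by
        rcases Nat.eq_zero_or_pos O with rfl | h'
        · simp
        · have : (1 : ℝ) ≤ O := by exact_mod_cast h'
          nlinarith [Nat.cast_nonneg (α := ℝ) O]
      have hdO : ((K : ℝ) - O) * O ≥ 0 :=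
        mul_nonneg (by linarith) (Nat.cast_nonneg O)
      nlinarith [mul_nonneg (by linarith : (0:ℝ) ≤ t - 1) hdO,
        mul_nonneg (by linarith : (0:ℝ) ≤ 4 - 2*t) hOO]
    · -- K < O
      have hd : (K : ℝ) + 1 ≤ O := by exact_mod_cast h
      have hK0 : (0 : ℝ) ≤ K := Nat.cast_nonneg K
      rcases Nat.lt_or_ge O 2 with h2 | h2
      · have hO1 : O = 1 := by omega
        have hK00 : K = 0 := by omega
        subst hO1 hK00
        push_cast
        nlinarith
      · have hO2 : (2 : ℝ) ≤ O := by exact_mod_cast h2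
        nlinarith [sq_nonneg ((O : ℝ) - K - (t - 1) * O + 1/2),
          sq_nonneg ((O : ℝ)), mul_nonneg (Nat.cast_nonneg (α := ℝ) O) hK0]
  have key : (K : ℝ) ^ 2 * (1 + t) - K * (2 * O * (t - 1) + 1 + t)
      + O * (O * (3 * t - 5) + 3 - t)
      = (1 + t) * (((O : ℝ) - K) ^ 2 + ((O : ℝ) - K)
          - 2 * (t - 1) * ((O : ℝ) - K) * O + (4 - 2 * t) * O * ((O : ℝ) - 1))
        + (t ^ 2 - 3) * (4 * (O : ℝ) ^ 2 - 2 * K * O - 2 * O) := by ring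
  rw [ge_iff_le, key, h3]
  have := mul_nonneg (by linarith : (0:ℝ) ≤ 1 + t) hI
  linarith
end

section
/- For all non-negative integers K and O and every real v with 0 ≤ v ≤ 1/2, it holds that K²((√3−1)v + 3 − 2√3) − K(2O − √3)((1+√3)v − √3) + O(O−1)((5+3√3)v − 3 − 2√3) ≤ 0. -/
lemma int_mul_succ_nonneg (n : ℤ) : 0 ≤ ((n : ℝ)) * (n + 1) := by
  rcases le_or_gt 0 n with h | h
  · have h' : (0:ℝ) ≤ n := by exact_mod_cast h
    positivity
  · have h1 : n ≤ -1 := by omega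
    have h1' : (n:ℝ) ≤ -1 := by exact_mod_cast h1
    nlinarith

theorem stmt3 (K O : ℕ) (v : ℝ) (hv0 : 0 ≤ v) (hv1 : v ≤ 1 / 2) :
    (K : ℝ) ^ 2 * ((Real.sqrt 3 - 1) * v + 3 - 2 * Real.sqrt 3)
      - K * (2 * O - Real.sqrt 3) * ((1 + Real.sqrt 3) * v - Real.sqrt 3)
      + O * ((O : ℝ) - 1) * ((5 + 3 * Real.sqrt 3) * v - 3 - 2 * Real.sqrt 3) ≤ 0 := by
  set s := Real.sqrt 3 with hsdef
  have hs : s ^ 2 = 3 := Real.sq_sqrt (by norm_num)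
  have hsp : 0 < s := Real.sqrt_pos.mpr (by norm_num)
  have hK0 : (0:ℝ) ≤ K := Nat.cast_nonneg K
  have hO0 : (0:ℝ) ≤ O := Nat.cast_nonneg O
  have hKK : (0:ℝ) ≤ (K:ℝ) * ((K:ℝ) - 1) := by
    rcases Nat.eq_zero_or_pos K with h | h
    · simp [h]
    · have : (1:ℝ) ≤ K := by exact_mod_cast h
      nlinarith
  have hOO : (0:ℝ) ≤ (O:ℝ) * ((O:ℝ) - 1) := by
    rcases Nat.eq_zero_or_pos O with h | h
    · simp [h]
    · have : (1:ℝ) ≤ O := by exact_mod_cast h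
      nlinarith
  have hmm : (0:ℝ) ≤ ((K:ℝ) - O) * ((K:ℝ) - O + 1) := by
    have := int_mul_succ_nonneg ((K:ℤ) - O)
    push_cast at this
    linarith
  have hF : (3 - 2*s)*(K:ℝ)^2 + 2*s*K*O - 3*K - (3 + 2*s)*(O*((O:ℝ)-1)) ≤ 0 := by
    rcases le_or_gt K O with h | h
    · have h' : (K:ℝ) ≤ O := by exact_mod_cast h
      nlinarith [mul_nonneg (mul_nonneg hsp.le hK0) (by linarith : (0:ℝ) ≤ (O:ℝ) - K),
        mul_nonneg hK0 (by linarith : (0:ℝ) ≤ (O:ℝ) - K), mul_nonneg hsp.le hKK,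
        mul_nonneg hsp.le hmm]
    · have h' : (O:ℝ) + 1 ≤ K := by exact_mod_cast h
      nlinarith [sq_nonneg (4*s*(K:ℝ) - (6+2*s)*((K:ℝ)-O) - 2*s), hs, hsp,
        mul_pos hsp (by linarith : (0:ℝ) < (K:ℝ) - O)]
  have hG : (5 - 3*s)*(K:ℝ)^2 + 2*(s-1)*K*O + (s-3)*K - (1 + s)*(O*((O:ℝ)-1)) ≤ 0 := by
    rcases le_or_gt K O with h | h
    · have h' : (K:ℝ) ≤ O := by exact_mod_cast h
      nlinarith [mul_nonneg hK0 (by linarith : (0:ℝ) ≤ (O:ℝ) - K), hKK, hmm,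
        mul_nonneg hsp.le hKK, mul_nonneg hsp.le hmm, hs]
    · have h' : (O:ℝ) + 1 ≤ K := by exact_mod_cast h
      nlinarith [sq_nonneg (2*(2*s-2)*(K:ℝ) - (4*((K:ℝ)-O) + 2*s - 2)), hs, hsp,
        (by linarith : (0:ℝ) < (K:ℝ) - O)]
  have key : (K : ℝ) ^ 2 * ((s - 1) * v + 3 - 2 * s)
      - K * (2 * O - s) * ((1 + s) * v - s)
      + O * ((O : ℝ) - 1) * ((5 + 3 * s) * v - 3 - 2 * s)
    = (1 - 2*v) * ((3 - 2*s)*(K:ℝ)^2 + 2*s*K*O - 3*K - (3 + 2*s)*(O*((O:ℝ)-1)))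
      + v * ((5 - 3*s)*(K:ℝ)^2 + 2*(s-1)*K*O + (s-3)*K - (1 + s)*(O*((O:ℝ)-1))) := by
    linear_combination ((v - 1) * (K:ℝ)) * hs
  rw [key]
  have h1 : (0:ℝ) ≤ 1 - 2*v := by linarith
  nlinarith [mul_nonpos_of_nonneg_of_nonpos h1 hF, mul_nonpos_of_nonneg_of_nonpos hv0 hG]
end

section
/- For all non-negative integers K and O and all reals v̲, v̄ with 0 ≤ v̲ ≤ v̄ ≤ 1/2, the inequality 3v̲·O(O−1) − v̄(K² − 3K + 2O²) − K² + 3KO − O(5O − 3) ≤ 0 holds. -/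
lemma int_mul_pred_nonneg (a : ℤ) : (0:ℝ) ≤ (a:ℝ) * ((a:ℝ) - 1) := by
  have h : 0 ≤ a * (a - 1) := by
    rcases le_or_gt 1 a with h | h
    · exact mul_nonneg (by omega) (by omega)
    · have := mul_nonneg (show (0:ℤ) ≤ -a by omega) (show (0:ℤ) ≤ 1 - a by omega)
      nlinarith
  calc (0:ℝ) ≤ ((a * (a-1) : ℤ) : ℝ) := by exact_mod_cast h
    _ = (a:ℝ) * ((a:ℝ) - 1) := by push_cast; ring

lemma g0_nonneg (K O : ℕ) : (0:ℝ) ≤ (K:ℝ)^2 - 3*K*O + 5*O^2 - 3*O := by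
  rcases O with _ | _ | O
  · push_cast; nlinarith [sq_nonneg ((K:ℝ))]
  · push_cast
    have := int_mul_pred_nonneg ((K:ℤ) - 1)
    push_cast at this
    nlinarith
  · have hO2 : (2:ℝ) ≤ ((O:ℕ) + 2 : ℕ) := by push_cast; linarith [Nat.cast_nonneg (α := ℝ) O]
    push_cast at hO2 ⊢
    nlinarith [sq_nonneg (2*(K:ℝ) - 3*((O:ℝ)+2))]

theorem stmt4 (K O : ℕ) (v vlo vhi : ℝ) (hv0 : 0 ≤ v) (hv1 : v ≤ 1 / 2)
    (hlo : 0 ≤ vlo) (hlohi : vlo ≤ vhi) (hhi : vhi = v) :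
    3 * vlo * O * ((O : ℝ) - 1) - vhi * ((K : ℝ) ^ 2 - 3 * K + 2 * O ^ 2)
      - K ^ 2 + 3 * K * O - O * (5 * (O : ℝ) - 3) ≤ 0 := by
  subst hhi
  have hO := int_mul_pred_nonneg (O : ℤ)
  have hKO := int_mul_pred_nonneg ((K : ℤ) - O)
  push_cast at hO hKO
  have hg0 := g0_nonneg K O
  have h1 : 0 ≤ (vhi - vlo) * ((O:ℝ) * ((O:ℝ) - 1)) :=
    mul_nonneg (by linarith) hO
  have h2 : 0 ≤ (1 - 2*vhi) * ((K:ℝ)^2 - 3*K*O + 5*O^2 - 3*O) :=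
    mul_nonneg (by linarith) hg0
  have h3 : 0 ≤ vhi * (((K:ℝ)-O) * ((K:ℝ)-O-1) + 2*((O:ℝ)*((O:ℝ)-1))) :=
    mul_nonneg hv0 (by linarith)
  nlinarith [h1, h2, h3]
end

section
/- For all non-negative integers K and O and all reals v̲, v̄ with 0 ≤ v̲ ≤ v̄ and 1/2 ≤ v̄ < 1, it holds that v̲·O(O−1) + v̄·K(1−K) + O(K − 2O + 1) ≤ 0. -/
theorem stmt5 (K O : ℕ) (vlo vhi : ℝ) (hlo : 0 ≤ vlo) (hlohi : vlo ≤ vhi)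
    (hhalf : 1 / 2 ≤ vhi) (hlt : vhi < 1) :
    vlo * O * ((O : ℝ) - 1) + vhi * K * (1 - (K : ℝ)) + O * ((K : ℝ) - 2 * O + 1) ≤ 0 := by
  have h1 : (0:ℝ) ≤ (K:ℝ) * ((K:ℝ) - 1) := by
    rcases Nat.eq_zero_or_pos K with h | h
    · simp [h]
    · have : (1:ℝ) ≤ (K:ℝ) := by exact_mod_cast h
      nlinarith
  have h2 : (0:ℝ) ≤ (O:ℝ) * ((O:ℝ) - 1) := by
    rcases Nat.eq_zero_or_pos O with h | h
    · simp [h]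
    · have : (1:ℝ) ≤ (O:ℝ) := by exact_mod_cast h
      nlinarith
  have h3 : (0:ℝ) ≤ ((K:ℝ) - O) * ((K:ℝ) - O - 1) := by
    rcases le_or_gt K O with h | h
    · have : (K:ℝ) ≤ O := by exact_mod_cast h
      nlinarith
    · have : (O:ℝ) + 1 ≤ K := by exact_mod_cast h
      nlinarith
  nlinarith [mul_nonneg (sub_nonneg.2 hlohi) h2, mul_nonneg (by linarith : (0:ℝ) ≤ 2*vhi - 1) h2,
    mul_nonneg (by linarith : (0:ℝ) ≤ 1 - vhi) h3, mul_nonneg (by linarith : (0:ℝ) ≤ 2*vhi - 1) h1,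
    mul_nonneg (by linarith : (0:ℝ) ≤ 1 - vhi) h1, mul_nonneg (by linarith : (0:ℝ) ≤ 1 - vhi) h2]
end

section
/- For every integer O ≥ 2 and every real v, the quantity v²(18(2+√3) − (32+16√3)O) + v((48+16√3)O − 18(3+√3)) − 3(8O − 9) is non-positive. -/
theorem stmt7 (O : ℤ) (h : 2 ≤ O) (v : ℝ) :
    v ^ 2 * (18 * (2 + Real.sqrt 3) - (32 + 16 * Real.sqrt 3) * O)
      + v * ((48 + 16 * Real.sqrt 3) * O - 18 * (3 + Real.sqrt 3))
      - 3 * (8 * (O : ℝ) - 9) ≤ 0 := by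
  have hO : (2 : ℝ) ≤ (O : ℝ) := by exact_mod_cast h
  set s := Real.sqrt 3 with hs
  have hs2 : s ^ 2 = 3 := Real.sq_sqrt (by norm_num)
  have hs1 : 1 ≤ s := by
    rw [hs, show (1:ℝ) = Real.sqrt 1 by simp]
    exact Real.sqrt_le_sqrt (by norm_num)
  have ha : 18 * (2 + s) - (32 + 16 * s) * (O:ℝ) < 0 := by nlinarith
  have key : 4 * (18 * (2 + s) - (32 + 16 * s) * (O:ℝ)) *
      (v ^ 2 * (18 * (2 + s) - (32 + 16 * s) * O)
        + v * ((48 + 16 * s) * O - 18 * (3 + s)) - 3 * (8 * (O : ℝ) - 9))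
      = (2 * (18 * (2 + s) - (32 + 16 * s) * (O:ℝ)) * v
        + ((48 + 16 * s) * (O:ℝ) - 18 * (3 + s))) ^ 2 := by
    linear_combination (-(16 * (O:ℝ) - 18) ^ 2) * hs2
  nlinarith [key, ha, sq_nonneg (2 * (18 * (2 + s) - (32 + 16 * s) * (O:ℝ)) * v
      + ((48 + 16 * s) * (O:ℝ) - 18 * (3 + s)))]
end

section
/- For every integer O ≥ 2 and every real v̄ with 2/9 ≤ v̄ ≤ 1 + √3/2, it holds that v̄²(4O² − 4O + 1) + 2v̄·O(3 − 4O) + O² ≤ 0. -/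
theorem stmt8 (O : ℤ) (h : 2 ≤ O) (vbar : ℝ) (h1 : 2 / 9 ≤ vbar)
    (h2 : vbar ≤ 1 + Real.sqrt 3 / 2) :
    vbar ^ 2 * (4 * (O : ℝ) ^ 2 - 4 * O + 1) + 2 * vbar * O * (3 - 4 * (O : ℝ))
      + (O : ℝ) ^ 2 ≤ 0 := by
  have hO : (2:ℝ) ≤ (O:ℝ) := by exact_mod_cast h
  have hs : Real.sqrt 3 ^ 2 = 3 := Real.sq_sqrt (by norm_num)
  have hs1 : (1:ℝ) ≤ Real.sqrt 3 := by nlinarith [Real.sqrt_nonneg 3]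
  set s := Real.sqrt 3 with hsdef
  -- endpoint values
  have e1 : (2/9:ℝ) ^ 2 * (4 * (O : ℝ) ^ 2 - 4 * O + 1) + 2 * (2/9) * O * (3 - 4 * (O : ℝ))
      + (O : ℝ) ^ 2 ≤ 0 := by
    nlinarith [mul_nonneg (by linarith : (0:ℝ) ≤ (O:ℝ) - 2) (by linarith : (0:ℝ) ≤ 47 * (O:ℝ) + 2)]
  have e2 : (1 + s/2) ^ 2 * (4 * (O : ℝ) ^ 2 - 4 * O + 1) + 2 * (1 + s/2) * O * (3 - 4 * (O : ℝ))
      + (O : ℝ) ^ 2 ≤ 0 := by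
    nlinarith [hs, hs1, hO, mul_nonneg (by linarith : (0:ℝ) ≤ s - 1) (by linarith : (0:ℝ) ≤ (O:ℝ) - 2)]
  have hkey : (0:ℝ) ≤ (vbar - 2/9) * (1 + s / 2 - vbar) :=
    mul_nonneg (by linarith) (by linarith)
  have ha : (0:ℝ) ≤ 4 * (O:ℝ)^2 - 4*O + 1 := by nlinarith
  have hx : (0:ℝ) < 7/9 + s/2 := by linarith
  nlinarith [mul_nonneg (neg_nonneg.2 e1) (by linarith : (0:ℝ) ≤ 1 + s/2 - vbar),
    mul_nonneg (neg_nonneg.2 e2) (by linarith : (0:ℝ) ≤ vbar - 2/9),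
    mul_nonneg (mul_nonneg hkey ha) (le_of_lt hx), hx]
end

section
/- Every linear congestion game with restricted altruistic social context (G, Γ) such that Γ is symmetric with unit diagonal admits an exact potential function, namely Φ(S) = (1/2)·Σ_{e∈E} [α_e·(n_e(S)(n_e(S)+1) + Σ_{(i,j)∈P_e(S)} γ_{ij}) + 2β_e·n_e(S)], where P_e(S) = {(i,j) : i ≠ j, e ∈ s_i ∩ s_j}. That is, for every strategy profile S, every player i, and every strategy t of player i, ĉ_i(S) − ĉ_i(S_{−i}⋄t) = Φ(S) − Φ(S_{−i}⋄t). -/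
open Finset

/-- Congestion of resource `e` in profile `S`: number of players using `e`. -/
def cong {n : ℕ} {E : Type*} [Fintype E] [DecidableEq E] (S : Fin n → Finset E) (e : E) : ℕ :=
  (Finset.univ.filter fun j => e ∈ S j).card

/-- Cost of player `j` in a linear congestion game with latencies `α e * x + β e`. -/
noncomputable def cost {n : ℕ} {E : Type*} [Fintype E] [DecidableEq E] (α β : E → ℝ) (S : Fin n → Finset E)
    (j : Fin n) : ℝ :=
  ∑ e ∈ S j, (α e * cong S e + β e)

/-- Altruistic cost of player `i` with social context matrix `Γ`. -/
noncomputable def acost {n : ℕ} {E : Type*} [Fintype E] [DecidableEq E] (α β : E → ℝ) (Γ : Fin n → Fin n → ℝ)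
    (S : Fin n → Finset E) (i : Fin n) : ℝ :=
  ∑ j, Γ i j * cost α β S j

/-- Ordered pairs of distinct players both using resource `e` in `S`. -/
def Pe {n : ℕ} {E : Type*} [DecidableEq E] (S : Fin n → Finset E) (e : E) : Finset (Fin n × Fin n) :=
  Finset.univ.filter fun p => p.1 ≠ p.2 ∧ e ∈ S p.1 ∧ e ∈ S p.2

/-- The potential function for restricted symmetric altruistic social contexts. -/
noncomputable def pot {n : ℕ} {E : Type*} [Fintype E] [DecidableEq E] (α β : E → ℝ) (Γ : Fin n → Fin n → ℝ)
    (S : Fin n → Finset E) : ℝ :=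
  (1 / 2) * ∑ e, (α e * (cong S e * (cong S e + 1) + ∑ p ∈ Pe S e, Γ p.1 p.2)
    + 2 * β e * cong S e)

/-- `Pe S e` is the off-diagonal of the set of users of `e`. -/
lemma Pe_eq_offDiag {n : ℕ} {E : Type*} [DecidableEq E] (S : Fin n → Finset E) (e : E) :
    Pe S e = (Finset.univ.filter fun j => e ∈ S j).offDiag := by
  ext p
  simp only [Pe, Finset.mem_offDiag, Finset.mem_filter, Finset.mem_univ, true_and]
  tauto

/-- The sum of `Γ` over `Pe S e` as a double sum minus the congestion. -/
lemma sum_Pe {n : ℕ} {E : Type*} [Fintype E] [DecidableEq E]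
    (Γ : Fin n → Fin n → ℝ) (hdiag : ∀ i, Γ i i = 1) (S : Fin n → Finset E) (e : E) :
    ∑ p ∈ Pe S e, Γ p.1 p.2
      = (∑ j ∈ Finset.univ.filter (fun j => e ∈ S j),
          ∑ k ∈ Finset.univ.filter (fun k => e ∈ S k), Γ j k) - (cong S e : ℝ) := by
  set F := Finset.univ.filter (fun j : Fin n => e ∈ S j) with hF
  have h1 : ∑ j ∈ F, ∑ k ∈ F, Γ j k = ∑ p ∈ F ×ˢ F, Γ p.1 p.2 := by
    rw [Finset.sum_product]
  have h2 : ∑ p ∈ F ×ˢ F, Γ p.1 p.2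
      = ∑ p ∈ F.diag, Γ p.1 p.2 + ∑ p ∈ F.offDiag, Γ p.1 p.2 := by
    rw [← Finset.diag_union_offDiag F, Finset.sum_union (Finset.disjoint_diag_offDiag _)]
  have h3 : ∑ p ∈ F.diag, Γ p.1 p.2 = (cong S e : ℝ) := by
    rw [Finset.sum_diag]
    simp [hdiag, cong, hF]
  rw [Pe_eq_offDiag, ← hF, h1, h2, h3]
  ring

/-- The altruistic cost rewritten as a sum over resources. -/
lemma acost_eq {n : ℕ} {E : Type*} [Fintype E] [DecidableEq E] (α β : E → ℝ)
    (Γ : Fin n → Fin n → ℝ) (S : Fin n → Finset E) (i : Fin n) :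
    acost α β Γ S i
      = ∑ e, (α e * cong S e + β e) * ∑ j ∈ Finset.univ.filter (fun j => e ∈ S j), Γ i j := by
  unfold acost cost
  have : ∀ j : Fin n, Γ i j * ∑ e ∈ S j, (α e * cong S e + β e)
      = ∑ e, (if e ∈ S j then Γ i j * (α e * cong S e + β e) else 0) := by
    intro j
    rw [Finset.mul_sum]
    rw [Finset.sum_ite_mem, Finset.univ_inter]
  simp_rw [this]
  rw [Finset.sum_comm]
  refine Finset.sum_congr rfl fun e _ => ?_
  rw [Finset.mul_sum, Finset.sum_filter]
  refine Finset.sum_congr rfl fun j _ => ?_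
  split <;> ring

/-- Key per-resource computation when player `i` abandons resource `e`. -/
lemma key {n : ℕ} {E : Type*} [Fintype E] [DecidableEq E] (α β : E → ℝ)
    (Γ : Fin n → Fin n → ℝ) (hdiag : ∀ i, Γ i i = 1) (hsym : ∀ i j, Γ i j = Γ j i)
    (S T : Fin n → Finset E) (i : Fin n) (h : ∀ j, j ≠ i → S j = T j)
    (e : E) (heS : e ∈ S i) (heT : e ∉ T i) :
    (α e * cong S e + β e) * (∑ j ∈ Finset.univ.filter (fun j => e ∈ S j), Γ i j)
      - (α e * cong T e + β e) * (∑ j ∈ Finset.univ.filter (fun j => e ∈ T j), Γ i j)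
    = (1 / 2) * (α e * (cong S e * (cong S e + 1) + ∑ p ∈ Pe S e, Γ p.1 p.2)
        + 2 * β e * cong S e)
      - (1 / 2) * (α e * (cong T e * (cong T e + 1) + ∑ p ∈ Pe T e, Γ p.1 p.2)
        + 2 * β e * cong T e) := by
  set F' := Finset.univ.filter (fun j : Fin n => e ∈ T j) with hF'
  have hiF' : i ∉ F' := by simp [hF', heT]
  have hFS : Finset.univ.filter (fun j : Fin n => e ∈ S j) = insert i F' := by
    ext j
    by_cases hj : j = i
    · subst hj; simp [heS, hF']
    · simp [hF', h j hj, hj]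
  have hcS : (cong S e : ℝ) = (F'.card : ℝ) + 1 := by
    unfold cong
    rw [hFS, Finset.card_insert_of_notMem hiF']
    push_cast; ring
  have hcT : (cong T e : ℝ) = (F'.card : ℝ) := rfl
  set B := ∑ j ∈ F', Γ i j with hB
  have hsum1 : ∑ j ∈ insert i F', Γ i j = 1 + B := by
    rw [Finset.sum_insert hiF', hdiag]
  have hBsym : ∑ j ∈ F', Γ j i = B := by
    rw [hB]; exact Finset.sum_congr rfl fun j _ => hsym j i
  set W := ∑ j ∈ F', ∑ k ∈ F', Γ j k with hW
  have hWS : ∑ j ∈ insert i F', ∑ k ∈ insert i F', Γ j k = 1 + 2 * B + W := by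
    rw [Finset.sum_insert hiF', Finset.sum_insert hiF', hdiag]
    have : ∀ j ∈ F', ∑ k ∈ insert i F', Γ j k = Γ j i + ∑ k ∈ F', Γ j k :=
      fun j _ => Finset.sum_insert hiF'
    rw [Finset.sum_congr rfl this, Finset.sum_add_distrib, hBsym]
    ring
  rw [sum_Pe Γ hdiag S e, sum_Pe Γ hdiag T e, hFS, ← hF', hsum1, hWS, hcS, hcT]
  ring

theorem stmt10 {n : ℕ} {E : Type*} [Fintype E] [DecidableEq E]
    (α β : E → ℝ) (hα : ∀ e, 0 ≤ α e) (hβ : ∀ e, 0 ≤ β e)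
    (Γ : Fin n → Fin n → ℝ)
    (hΓ0 : ∀ i j, 0 ≤ Γ i j) (hΓ1 : ∀ i j, Γ i j ≤ 1)
    (hdiag : ∀ i, Γ i i = 1) (hsym : ∀ i j, Γ i j = Γ j i)
    (S : Fin n → Finset E) (i : Fin n) (t : Finset E) :
    acost α β Γ S i - acost α β Γ (Function.update S i t) i
      = pot α β Γ S - pot α β Γ (Function.update S i t) := by
  set T := Function.update S i t with hT
  have hTi : T i = t := Function.update_self i t S
  have hTj : ∀ j, j ≠ i → S j = T j := fun j hj => (Function.update_of_ne hj t S).symm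
  rw [acost_eq, acost_eq, pot, pot, ← Finset.sum_sub_distrib, ← mul_sub,
    ← Finset.sum_sub_distrib, Finset.mul_sum]
  refine Finset.sum_congr rfl fun e _ => ?_
  rw [mul_sub]
  by_cases hS : e ∈ S i
  · by_cases ht : e ∈ t
    · -- nothing changes for this resource
      have hfilter : Finset.univ.filter (fun j : Fin n => e ∈ S j)
          = Finset.univ.filter (fun j : Fin n => e ∈ T j) := by
        ext j
        by_cases hj : j = i
        · subst hj; simp [hS, hTi, ht]
        · simp [hTj j hj]
      have hc : cong S e = cong T e := by unfold cong; rw [hfilter]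
      have hP : Pe S e = Pe T e := by
        rw [Pe_eq_offDiag, Pe_eq_offDiag, hfilter]
      rw [hfilter, hc, hP]
      ring
    · exact key α β Γ hdiag hsym S T i hTj e hS (hTi ▸ ht)
  · by_cases ht : e ∈ t
    · have := key α β Γ hdiag hsym T S i (fun j hj => (hTj j hj).symm) e (hTi ▸ ht) hS
      linarith
    · have hfilter : Finset.univ.filter (fun j : Fin n => e ∈ S j)
          = Finset.univ.filter (fun j : Fin n => e ∈ T j) := by
        ext j
        by_cases hj : j = i
        · subst hj; simp [hS, hTi, ht]
        · simp [hTj j hj]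
      have hc : cong S e = cong T e := by unfold cong; rw [hfilter]
      have hP : Pe S e = Pe T e := by
        rw [Pe_eq_offDiag, Pe_eq_offDiag, hfilter]
      rw [hfilter, hc, hP]
      ring
end

section
/- For every real v with 0 ≤ v ≤ 1/2 and every non-negative integer K, the inequality K·(v·((√3−1)K + 3 + √3) + (3 − 2√3)K − 3) ≤ 0 holds. -/
theorem stmt15 (v : ℝ) (hv0 : 0 ≤ v) (hv1 : v ≤ 1 / 2) (K : ℕ) :
    (K : ℝ) * (v * ((Real.sqrt 3 - 1) * K + 3 + Real.sqrt 3)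
      + (3 - 2 * Real.sqrt 3) * K - 3) ≤ 0 := by
  have hK : (0:ℝ) ≤ (K:ℝ) := Nat.cast_nonneg K
  have hs : Real.sqrt 3 ^ 2 = 3 := Real.sq_sqrt (by norm_num)
  have hs1 : (1.7:ℝ) ≤ Real.sqrt 3 := by
    nlinarith [Real.sqrt_nonneg 3]
  have hs2 : Real.sqrt 3 ≤ 1.8 := by
    nlinarith [Real.sqrt_nonneg 3]
  have hinner : v * ((Real.sqrt 3 - 1) * K + 3 + Real.sqrt 3)
      + (3 - 2 * Real.sqrt 3) * K - 3 ≤ 0 := by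
    nlinarith [mul_nonneg (sub_nonneg.2 hv1) hK, mul_nonneg hv0 hK]
  exact mul_nonpos_of_nonneg_of_nonpos hK hinner
end
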